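/- Let a < b be reals, 𝓘 = [a,b], let ϕ : 𝓘 → ℝ^μ and h : 𝓘 → ℝ^ϰ be measurable with square-integrable components, g(τ) = [ϕ(τ); h(τ)] ∈ ℝ^κ, and assume 𝔥 = ∫_𝓘 h hᵀ dτ ≻ 0 and 𝔈 = ∫_𝓘 ϕϕᵀ dτ − Γ 𝔥⁻¹ Γᵀ ≻ 0 with Γ = ∫_𝓘 ϕ hᵀ dτ, ε(τ) = ϕ(τ) − Γ 𝔥⁻¹ h(τ), T = [Γ 𝔥⁻¹; I_ϰ] √𝔥, T̃ = [I_μ; O_{ϰ,μ}] √𝔈. Then for any ∈ ℝ^{n×κn}, B̂ ∈ ℝ^{n×κp}, K ∈ ℝ^{p×n} and any square-integrable y : 𝓘 → ℝ^n: ∫_𝓘 [Â + B̂ (I_κ ⊗ K)] (g(τ) ⊗ I_n) y(τ) dτ = [Â (T ⊗ I_n) + B̂ (T ⊗ K)] ξ + [Â (T̃ ⊗ I_n) + B̂ (T̃ ⊗ K)] e, where ξ = ∫_𝓘 (√𝔥⁻¹ h(τ) ⊗ I_n) y(τ) dτ ∈ ℝ^{ϰn} and e = ∫_𝓘 (√𝔈⁻¹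 ε(τ) ⊗ I_n) y(τ) dτ ∈ ℝ^{μn}. -/

import Mathlib

open MeasureTheory Matrix Classical
open scoped Kronecker

/-- The Kronecker product `g ⊗ I_n` of a column vector `g ∈ ℝ^κ`
(indexed by `κI`) with the `n × n` identity matrix. -/
noncomputable def vecKronId {κI : Type*} (g : κI → ℝ) (n : ℕ) :
    Matrix (κI × Fin n) (Fin n) ℝ :=
  fun ki j => g ki.1 * (1 : Matrix (Fin n) (Fin n) ℝ) ki.2 j

/-- The entrywise (cross-)Gram integral `∫_{[a,b]} ϕ(τ) h(τ)ᵀ dτ`. -/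
noncomputable def gramOn {μI ϰI : Type*} (a b : ℝ) (ϕ : ℝ → μI → ℝ) (h : ℝ → ϰI → ℝ) :
    Matrix μI ϰI ℝ :=
  fun i j => ∫ τ in Set.Icc a b, ϕ τ i * h τ j

/-- The positive semidefinite square root `√X` of a positive semidefinite
real matrix (junk value `0` if `X` is not positive semidefinite). -/
noncomputable def psdSqrt {m : Type*} [Fintype m] [DecidableEq m] (X : Matrix m m ℝ) :
    Matrix m m ℝ :=
  if hX : X.PosSemidef then
    (hX.1.eigenvectorUnitary : Matrix m m ℝ) *
      diagonal ((↑) ∘ NNReal.sqrt ∘ Real.toNNReal ∘ hX.1.eigenvalues) *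
      (star hX.1.eigenvectorUnitary : Matrix m m ℝ)
  else 0

/-! Pointwise, `g = [Γ𝔥⁻¹h + ε; h] = [Γ𝔥⁻¹; I] h + [I; 0] ε`, and since `√𝔥` and `√𝔈` are
invertible this is `T (√𝔥⁻¹ h) + T̃ (√𝔈⁻¹ ε)`. Tensoring with `Iₙ` and applying the mixed-product
rule turns `[Â + B̂ (I ⊗ K)] (M ⊗ Iₙ)` into `Â (M ⊗ Iₙ) + B̂ (M ⊗ K)`, so the integrand is a
constant matrix applied to the integrands of `ξ` and `e`; these are integrable because `h`, `ε`
and `y` are square-integrable, and the identity follows by linearity of the integral. -/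

theorem psdSqrt_mul_self {m : Type*} [Fintype m] [DecidableEq m] {X : Matrix m m ℝ}
    (hX : X.PosSemidef) : psdSqrt X * psdSqrt X = X := by
  have hU : (star hX.1.eigenvectorUnitary : Matrix m m ℝ) *
      (hX.1.eigenvectorUnitary : Matrix m m ℝ) = 1 := Unitary.coe_star_mul_self _
  have hA : ∀ A B C : Matrix m m ℝ, (A * B * C) * (A * B * C) = A * (B * (C * A) * B) * C := by
    intros; simp only [Matrix.mul_assoc]
  rw [psdSqrt, dif_pos hX, hA, hU, Matrix.mul_one, diagonal_mul_diagonal]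
  conv_rhs => rw [hX.1.spectral_theorem, Unitary.conjStarAlgAut_apply]
  congr 3
  funext i
  simp [hX.eigenvalues_nonneg i]

theorem Matrix.PosDef.isUnit_det_psdSqrt {m : Type*} [Fintype m] [DecidableEq m]
    {X : Matrix m m ℝ} (hX : X.PosDef) : IsUnit (psdSqrt X).det := by
  have hdet : (psdSqrt X).det * (psdSqrt X).det = X.det := by
    rw [← det_mul, psdSqrt_mul_self hX.posSemidef]
  refine isUnit_iff_ne_zero.mpr fun h0 => hX.det_pos.ne' ?_
  rw [← hdet, h0, mul_zero]

theorem Matrix.mul_mulVec_nonsing_inv_mulVec {R l m : Type*} [CommRing R] [Fintype m]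
    [DecidableEq m] (M : Matrix l m R) {S : Matrix m m R} (hS : IsUnit S.det) (v : m → R) :
    (M * S) *ᵥ (S⁻¹ *ᵥ v) = M *ᵥ v := by
  rw [mulVec_mulVec, Matrix.mul_assoc, mul_nonsing_inv _ hS, Matrix.mul_one]

theorem Matrix.sum_elim_mulVec_add_eq_fromRows {R m k : Type*} [Semiring R] [Fintype m]
    [Fintype k] [DecidableEq m] [DecidableEq k] (G : Matrix m k R) (x : m → R) (v : k → R) :
    Sum.elim (G *ᵥ v + x) v = fromRows G 1 *ᵥ v + fromRows 1 0 *ᵥ x := by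
  rw [fromRows_mulVec, fromRows_mulVec, one_mulVec, one_mulVec, zero_mulVec]
  funext i
  cases i <;> simp [add_comm]

section vecKronId

variable {κI : Type*} {n : ℕ}

theorem vecKronId_mulVec (v : κI → ℝ) (y : Fin n → ℝ) :
    vecKronId v n *ᵥ y = fun j => v j.1 * y j.2 := by
  funext j
  simp [vecKronId, mulVec, dotProduct, one_apply]

theorem vecKronId_add (u v : κI → ℝ) : vecKronId (u + v) n = vecKronId u n + vecKronId v n := by
  ext
  simp [vecKronId, add_mul]

theorem kronecker_one_mul_vecKronId {m : Type*} [Fintype κI] (M : Matrix m κI ℝ) (v : κI → ℝ) :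
    (M ⊗ₖ (1 : Matrix (Fin n) (Fin n) ℝ)) * vecKronId v n = vecKronId (M *ᵥ v) n := by
  ext ⟨i, r⟩ j
  simp only [mul_apply, kroneckerMap_apply, vecKronId, Fintype.sum_prod_type, mulVec, dotProduct]
  simp [one_apply]

end vecKronId

theorem add_mul_one_kronecker_mul_kronecker_one {R l κ m r s : Type*} [CommSemiring R]
    [Fintype κ] [DecidableEq κ] [Fintype r] [Fintype s] [DecidableEq s]
    (A : Matrix l (κ × s) R) (B : Matrix l (κ × r) R) (K : Matrix r s R) (M : Matrix κ m R) :
    (A + B * ((1 : Matrix κ κ R) ⊗ₖ K)) * (M ⊗ₖ (1 : Matrix s s R)) =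
      A * (M ⊗ₖ 1) + B * (M ⊗ₖ K) := by
  rw [Matrix.add_mul, Matrix.mul_assoc, ← mul_kronecker_mul, Matrix.one_mul, Matrix.mul_one]
  rfl

section Integral

variable {α : Type*} [MeasurableSpace α] {ν : Measure α}

theorem memLp_mulVec {k m : Type*} [Fintype k] {p : ENNReal} (A : Matrix m k ℝ)
    {f : α → k → ℝ} (hf : ∀ j, MemLp (fun τ => f τ j) p ν) (i : m) :
    MemLp (fun τ => (A *ᵥ f τ) i) p ν := by
  simp only [mulVec, dotProduct]
  exact memLp_finsetSum _ fun j _ => (hf j).const_mul _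

theorem integrable_vecKronId_mulVec {κI : Type*} {n : ℕ} {v : α → κI → ℝ} {y : α → Fin n → ℝ}
    (hv : ∀ k, MemLp (fun τ => v τ k) 2 ν) (hy : ∀ r, MemLp (fun τ => y τ r) 2 ν)
    (j : κI × Fin n) : Integrable (fun τ => (vecKronId (v τ) n *ᵥ y τ) j) ν := by
  simp only [vecKronId_mulVec]
  exact (hv j.1).integrable_mul (hy j.2)

theorem integrable_mulVec_apply {k m : Type*} [Fintype k] (C : Matrix m k ℝ) {F : α → k → ℝ}
    (hF : ∀ j, Integrable (fun τ => F τ j) ν) (i : m) :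
    Integrable (fun τ => (C *ᵥ F τ) i) ν :=
  integrable_finsetSum _ fun j _ => (hF j).const_mul _

theorem integral_mulVec_apply {k m : Type*} [Fintype k] (C : Matrix m k ℝ) {F : α → k → ℝ}
    (hF : ∀ j, Integrable (fun τ => F τ j) ν) (i : m) :
    ∫ τ, (C *ᵥ F τ) i ∂ν = (C *ᵥ fun j => ∫ τ, F τ j ∂ν) i := by
  simp only [mulVec, dotProduct]
  rw [integral_finsetSum _ fun j _ => (hF j).const_mul _]
  simp_rw [integral_const_mul]

end Integral

theorem ksd_distributed_delay_integral_general
    (μ ϰ n p : ℕ) (a b : ℝ)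
    (ϕ : ℝ → Fin μ → ℝ) (h : ℝ → Fin ϰ → ℝ)
    (hϕL2 : ∀ i, MemLp (fun τ => ϕ τ i) 2 (volume.restrict (Set.Icc a b)))
    (hhL2 : ∀ i, MemLp (fun τ => h τ i) 2 (volume.restrict (Set.Icc a b)))
    (𝔥 : Matrix (Fin ϰ) (Fin ϰ) ℝ) (h𝔥pd : 𝔥.PosDef)
    (Γ : Matrix (Fin μ) (Fin ϰ) ℝ)
    (𝔈 : Matrix (Fin μ) (Fin μ) ℝ)
    (h𝔈pd : 𝔈.PosDef)
    (ε : ℝ → Fin μ → ℝ) (hε : ∀ τ, ε τ = ϕ τ - (Γ * 𝔥⁻¹) *ᵥ h τ)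
    (T : Matrix (Fin μ ⊕ Fin ϰ) (Fin ϰ) ℝ)
    (hT : T = Matrix.fromRows (Γ * 𝔥⁻¹) (1 : Matrix (Fin ϰ) (Fin ϰ) ℝ) * psdSqrt 𝔥)
    (Ttil : Matrix (Fin μ ⊕ Fin ϰ) (Fin μ) ℝ)
    (hTtil : Ttil =
      Matrix.fromRows (1 : Matrix (Fin μ) (Fin μ) ℝ) (0 : Matrix (Fin ϰ) (Fin μ) ℝ) * psdSqrt 𝔈)
    (Ahat : Matrix (Fin n) ((Fin μ ⊕ Fin ϰ) × Fin n) ℝ)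
    (Bhat : Matrix (Fin n) ((Fin μ ⊕ Fin ϰ) × Fin p) ℝ)
    (K : Matrix (Fin p) (Fin n) ℝ)
    (y : ℝ → Fin n → ℝ)
    (hyL2 : ∀ i, MemLp (fun τ => y τ i) 2 (volume.restrict (Set.Icc a b)))
    (ξ : Fin ϰ × Fin n → ℝ)
    (hξ : ξ = fun j => ∫ τ in Set.Icc a b, (vecKronId ((psdSqrt 𝔥)⁻¹ *ᵥ h τ) n *ᵥ y τ) j)
    (e : Fin μ × Fin n → ℝ)
    (he : e = fun j => ∫ τ in Set.Icc a b, (vecKronId ((psdSqrt 𝔈)⁻¹ *ᵥ ε τ) n *ᵥ y τ) j) :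
    (fun i => ∫ τ in Set.Icc a b,
        (((Ahat + Bhat * ((1 : Matrix (Fin μ ⊕ Fin ϰ) (Fin μ ⊕ Fin ϰ) ℝ) ⊗ₖ K)) *
            vecKronId (Sum.elim (ϕ τ) (h τ)) n) *ᵥ y τ) i) =
      (Ahat * (T ⊗ₖ (1 : Matrix (Fin n) (Fin n) ℝ)) + Bhat * (T ⊗ₖ K)) *ᵥ ξ +
        (Ahat * (Ttil ⊗ₖ (1 : Matrix (Fin n) (Fin n) ℝ)) + Bhat * (Ttil ⊗ₖ K)) *ᵥ e := by
  have hsplit : ∀ τ, Sum.elim (ϕ τ) (h τ) =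
      T *ᵥ ((psdSqrt 𝔥)⁻¹ *ᵥ h τ) + Ttil *ᵥ ((psdSqrt 𝔈)⁻¹ *ᵥ ε τ) := by
    intro τ
    rw [hT, hTtil, mul_mulVec_nonsing_inv_mulVec _ h𝔥pd.isUnit_det_psdSqrt,
      mul_mulVec_nonsing_inv_mulVec _ h𝔈pd.isUnit_det_psdSqrt,
      ← sum_elim_mulVec_add_eq_fromRows, hε τ, add_sub_cancel]
  have hpoint : ∀ τ, ((Ahat + Bhat * ((1 : Matrix (Fin μ ⊕ Fin ϰ) (Fin μ ⊕ Fin ϰ) ℝ) ⊗ₖ K)) *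
      vecKronId (Sum.elim (ϕ τ) (h τ)) n) *ᵥ y τ =
      (Ahat * (T ⊗ₖ (1 : Matrix (Fin n) (Fin n) ℝ)) + Bhat * (T ⊗ₖ K)) *ᵥ
        (vecKronId ((psdSqrt 𝔥)⁻¹ *ᵥ h τ) n *ᵥ y τ) +
      (Ahat * (Ttil ⊗ₖ (1 : Matrix (Fin n) (Fin n) ℝ)) + Bhat * (Ttil ⊗ₖ K)) *ᵥ
        (vecKronId ((psdSqrt 𝔈)⁻¹ *ᵥ ε τ) n *ᵥ y τ) := by
    intro τ
    rw [hsplit τ, vecKronId_add, ← kronecker_one_mul_vecKronId T,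
      ← kronecker_one_mul_vecKronId Ttil, Matrix.mul_add, ← Matrix.mul_assoc, ← Matrix.mul_assoc,
      add_mul_one_kronecker_mul_kronecker_one, add_mul_one_kronecker_mul_kronecker_one,
      add_mulVec, mulVec_mulVec, mulVec_mulVec]
    -- the sides differ only in the instance path to `*` on `ℝ` inside `⊗ₖ`
    rfl
  have hεL2 : ∀ i, MemLp (fun τ => ε τ i) 2 (volume.restrict (Set.Icc a b)) := by
    simp_rw [hε]
    exact fun i => (hϕL2 i).sub (memLp_mulVec _ hhL2 i)
  have hξint := integrable_vecKronId_mulVec (memLp_mulVec (psdSqrt 𝔥)⁻¹ hhL2) hyL2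
  have heint := integrable_vecKronId_mulVec (memLp_mulVec (psdSqrt 𝔈)⁻¹ hεL2) hyL2
  funext i
  simp only [hpoint, Pi.add_apply]
  rw [integral_add (integrable_mulVec_apply _ hξint i) (integrable_mulVec_apply _ heint i),
    integral_mulVec_apply _ hξint, integral_mulVec_apply _ heint, hξ, he]

/-- **identity (19) of the paper.** A distributed-delay integral
term is rewritten through the finite-dimensional vectors
`ξ = ∫ (√𝔥⁻¹ h(τ) ⊗ Iₙ) y(τ) dτ` and `e = ∫ (√𝔈⁻¹ ε(τ) ⊗ Iₙ) y(τ) dτ`: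
`∫ [Â + B̂ (I_κ ⊗ K)] (g(τ) ⊗ Iₙ) y(τ) dτ
  = [Â (T ⊗ Iₙ) + B̂ (T ⊗ K)] ξ + [Â (T̃ ⊗ Iₙ) + B̂ (T̃ ⊗ K)] e`. -/
theorem ksd_distributed_delay_integral
    (μ ϰ n p : ℕ) (a b : ℝ) (hab : a < b)
    (ϕ : ℝ → Fin μ → ℝ) (h : ℝ → Fin ϰ → ℝ)
    (hϕmeas : ∀ i, Measurable fun τ => ϕ τ i)
    (hhmeas : ∀ i, Measurable fun τ => h τ i)
    (hϕL2 : ∀ i, MemLp (fun τ => ϕ τ i) 2 (volume.restrict (Set.Icc a b)))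
    (hhL2 : ∀ i, MemLp (fun τ => h τ i) 2 (volume.restrict (Set.Icc a b)))
    (𝔥 : Matrix (Fin ϰ) (Fin ϰ) ℝ) (h𝔥 : 𝔥 = gramOn a b h h) (h𝔥pd : 𝔥.PosDef)
    (Γ : Matrix (Fin μ) (Fin ϰ) ℝ) (hΓ : Γ = gramOn a b ϕ h)
    (𝔈 : Matrix (Fin μ) (Fin μ) ℝ)
    (h𝔈 : 𝔈 = gramOn a b ϕ ϕ - Γ * 𝔥⁻¹ * Γᵀ) (h𝔈pd : 𝔈.PosDef)
    (ε : ℝ → Fin μ → ℝ) (hε : ∀ τ, ε τ = ϕ τ - (Γ * 𝔥⁻¹) *ᵥ h τ)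
    (T : Matrix (Fin μ ⊕ Fin ϰ) (Fin ϰ) ℝ)
    (hT : T = Matrix.fromRows (Γ * 𝔥⁻¹) (1 : Matrix (Fin ϰ) (Fin ϰ) ℝ) * psdSqrt 𝔥)
    (Ttil : Matrix (Fin μ ⊕ Fin ϰ) (Fin μ) ℝ)
    (hTtil : Ttil =
      Matrix.fromRows (1 : Matrix (Fin μ) (Fin μ) ℝ) (0 : Matrix (Fin ϰ) (Fin μ) ℝ) * psdSqrt 𝔈)
    (Ahat : Matrix (Fin n) ((Fin μ ⊕ Fin ϰ) × Fin n) ℝ)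
    (Bhat : Matrix (Fin n) ((Fin μ ⊕ Fin ϰ) × Fin p) ℝ)
    (K : Matrix (Fin p) (Fin n) ℝ)
    (y : ℝ → Fin n → ℝ)
    (hymeas : ∀ i, Measurable fun τ => y τ i)
    (hyL2 : ∀ i, MemLp (fun τ => y τ i) 2 (volume.restrict (Set.Icc a b)))
    (ξ : Fin ϰ × Fin n → ℝ)
    (hξ : ξ = fun j => ∫ τ in Set.Icc a b, (vecKronId ((psdSqrt 𝔥)⁻¹ *ᵥ h τ) n *ᵥ y τ) j)
    (e : Fin μ × Fin n → ℝ)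
    (he : e = fun j => ∫ τ in Set.Icc a b, (vecKronId ((psdSqrt 𝔈)⁻¹ *ᵥ ε τ) n *ᵥ y τ) j) :
    (fun i => ∫ τ in Set.Icc a b,
        (((Ahat + Bhat * ((1 : Matrix (Fin μ ⊕ Fin ϰ) (Fin μ ⊕ Fin ϰ) ℝ) ⊗ₖ K)) *
            vecKronId (Sum.elim (ϕ τ) (h τ)) n) *ᵥ y τ) i) =
      (Ahat * (T ⊗ₖ (1 : Matrix (Fin n) (Fin n) ℝ)) + Bhat * (T ⊗ₖ K)) *ᵥ ξ +
        (Ahat * (Ttil ⊗ₖ (1 : Matrix (Fin n) (Fin n) ℝ)) + Bhat * (Ttil ⊗ₖ K)) *ᵥ e :=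
  ksd_distributed_delay_integral_general μ ϰ n p a b ϕ h hϕL2 hhL2 𝔥 h𝔥pd Γ 𝔈 h𝔈pd ε hε T hT Ttil
    hTtil Ahat Bhat K y hyL2 ξ hξ e he
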